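/- Let p̂ ∈ (0,1), q̂ = 1−p̂, with q̂ ≤ min_{1≤j≤d} p_j, and let φ_{x,y}(z) = C(N,z) p̂^z q̂^{N−z} Σ_{n=0}^N Q_n(z;N,p̂) Q_n(x,y;N,p). Then for all x,y ∈ ℕ^d with |x| = |y| = N and every real ψ, the probability generating function identity Σ_{z=0}^N φ_{x,y}(z) ψ^{N−z} = (m(x;N,p) m(y;N,p))^{−1} Σ_{r=0}^N C(N,r) (−1)^r (1−ψ)^r q̂^r Σ_{z∈ℕ^d: z ≤ x, z ≤ y, |z| = r} (r!/(z_1!⋯z_d!)) ∏_{i=1}^d p_i^{z_i} · ((N−r)!/∏_{i=1}^d (x_i−z_i)!) ∏_{i=1}^d p_i^{x_i−z_i} · ((N−r)!/∏_{i=1}^d (y_i−z_i)!) ∏_{i=1}^d p_i^{y_i−z_i} holds; this identifies N−Z under φ_{x,y} with the number of thinned matches in two multinomial sequences of trials. -/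

import Mathlib

/-!
Summing the Krawtchouk polynomials against binomial weights gives
`∑_z C(N,z) p̂^z (q̂ψ)^(N-z) Q_n(z;N,p̂) = (1+u)^(N-n) u^n` with `u = q̂(ψ-1)`, so the left side
is `∑_n Q_n(x,y) (1+u)^(N-n) u^n`. Collecting powers of `u`, the coefficient of `u^r` is
`∑_{n ≤ r} C(N-n,r-n) Q_n(x,y)`. In the explicit formula for `Q_n` the factor
`C(N-|z|,n-|z|) (-1)^(n-|z|)` is exactly the inverse of this binomial transform, so only the
terms with `|z| = r` survive, and each of them, multiplied by `m(x) m(y)`, splits into the three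
multinomial probabilities `m(z;r,p) m(x-z;N-r,p) m(y-z;N-r,p)`.
-/

open Finset

/-- Multinomial probability `m(x;N,p)`. -/
noncomputable def mProb (d N : ℕ) (p : Fin d → ℝ) (x : Fin d → ℕ) : ℝ :=
  ((N.factorial : ℝ) / ∏ i, ((x i).factorial : ℝ)) * ∏ i, (p i) ^ (x i)

/-- Univariate Krawtchouk polynomial `Q_n(x;N,s)`, normalized so `Q_n(0;N,s) = 1`. -/
noncomputable def kraw (N n x : ℕ) (s : ℝ) : ℝ :=
  ∑ ν ∈ Finset.range (n + 1),
    (-(1 - s) / s) ^ ν * (x.choose ν : ℝ) * ((N - x).choose (n - ν) : ℝ) / (N.choose n : ℝ)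

/-- Reproducing kernel polynomial `Q_n(x,y;N,p)` on the multinomial distribution. -/
noncomputable def kernelQ (d N : ℕ) (p : Fin d → ℝ) (n : ℕ) (x y : Fin d → ℕ) : ℝ :=
  ∑ z ∈ (Finset.Iic (x ⊓ y)).filter (fun z => ∑ i, z i ≤ n),
    (N.choose (∑ i, z i) : ℝ) * ((N - ∑ i, z i).choose (n - ∑ i, z i) : ℝ) *
      (-1 : ℝ) ^ (n - ∑ i, z i) *
      (((∑ i, z i).factorial : ℝ) / ∏ i, ((z i).factorial : ℝ)) *
      (∏ i, ((x i).descFactorial (z i) : ℝ) * ((y i).descFactorial (z i) : ℝ) / (p i) ^ (z i)) /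
      ((N.descFactorial (∑ i, z i) : ℝ)) ^ 2

/-- The mixing measure `φ_{x,y}(z) = C(N,z) p̂^z q̂^{N−z} Σ_{n=0}^N Q_n(z;N,p̂) Q_n(x,y;N,p)`. -/
noncomputable def phiXY (d N : ℕ) (p : Fin d → ℝ) (phat qhat : ℝ)
    (x y : Fin d → ℕ) (z : ℕ) : ℝ :=
  (N.choose z : ℝ) * phat ^ z * qhat ^ (N - z) *
    ∑ n ∈ Finset.range (N + 1), kraw N n z phat * kernelQ d N p n x y

theorem choose_mul_choose_sub_comm {M a b : ℕ} :
    M.choose a * (M - a).choose b = M.choose b * (M - b).choose a := by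
  have ha := Nat.choose_mul (n := M) (Nat.le_add_right a b)
  have hb := Nat.choose_mul (n := M) (Nat.le_add_left b a)
  rw [Nat.add_sub_cancel_left] at ha
  rw [Nat.add_sub_cancel] at hb
  rw [← ha, ← hb, Nat.choose_symm_add]

theorem choose_add_mul_choose_mul_choose {N n ν k : ℕ} (hν : ν ≤ n) :
    N.choose (ν + k) * (ν + k).choose ν * (N - (ν + k)).choose (n - ν)
      = N.choose n * n.choose ν * (N - n).choose k := by
  have hleft : N.choose (ν + k) * (ν + k).choose ν = N.choose ν * (N - ν).choose k := by
    simpa using Nat.choose_mul (n := N) (Nat.le_add_right ν k)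
  rw [hleft, Nat.choose_mul hν, mul_assoc, Nat.sub_add_eq, choose_mul_choose_sub_comm, mul_assoc,
    show N - ν - (n - ν) = N - n by omega]

theorem sum_range_neg_one_pow_mul_choose_mul_choose (M R : ℕ) :
    ∑ j ∈ range (R + 1), (-1 : ℝ) ^ j * ((M.choose j : ℝ) * ((M - j).choose (R - j) : ℝ))
      = if R = 0 then 1 else 0 := by
  have hterm : ∀ j ∈ range (R + 1), (-1 : ℝ) ^ j * ((M.choose j : ℝ) * ((M - j).choose (R - j) : ℝ))
      = (M.choose R : ℝ) * ((-1 : ℝ) ^ j * (R.choose j : ℝ)) := fun j hj => by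
    rw [← Nat.cast_mul, ← Nat.choose_mul (Nat.lt_succ_iff.1 (mem_range.1 hj))]
    push_cast
    ring
  have halt : ∑ j ∈ range (R + 1), (-1 : ℝ) ^ j * (R.choose j : ℝ) = if R = 0 then 1 else 0 := by
    exact_mod_cast Int.alternating_sum_range_choose (n := R)
  rw [sum_congr rfl hterm, ← mul_sum, halt]
  split_ifs with hR <;> simp [hR]

theorem sum_range_choose_mul_choose_mul_choose_mul_pow {N n ν : ℕ} (hν : ν ≤ n) (hn : n ≤ N)
    (s w : ℝ) :
    ∑ z ∈ range (N + 1),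
        (N.choose z : ℝ) * (z.choose ν : ℝ) * ((N - z).choose (n - ν) : ℝ) * s ^ z * w ^ (N - z)
      = (N.choose n : ℝ) * (n.choose ν : ℝ) * s ^ ν * w ^ (n - ν) * (s + w) ^ (N - n) := by
  have hsupp : Ico ν (ν + (N - n + 1)) ⊆ range (N + 1) := fun z hz => by
    rw [mem_Ico] at hz
    rw [mem_range]
    omega
  rw [← sum_subset hsupp fun z hzN hz => ?vanish, sum_Ico_eq_sum_range, Nat.add_sub_cancel_left,
    add_pow, mul_sum]
  case vanish =>
    rw [mem_range] at hzN
    rw [mem_Ico, not_and_or, not_le, not_lt] at hz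
    rcases hz with hz | hz
    · simp [Nat.choose_eq_zero_of_lt hz]
    · simp [Nat.choose_eq_zero_of_lt (by omega : N - z < n - ν)]
  refine sum_congr rfl fun k hk => ?_
  have hk : k ≤ N - n := Nat.lt_succ_iff.1 (mem_range.1 hk)
  have hchoose := choose_add_mul_choose_mul_choose (N := N) (k := k) hν
  rw [show N - (ν + k) = (n - ν) + (N - n - k) by omega, pow_add, pow_add]
  rw [show N - (ν + k) = (n - ν) + (N - n - k) by omega] at hchoose
  have hchooseℝ := congrArg (Nat.cast : ℕ → ℝ) hchoose
  push_cast at hchooseℝ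
  linear_combination s ^ ν * s ^ k * w ^ (n - ν) * w ^ (N - n - k) * hchooseℝ

theorem sum_range_mul_one_add_pow_mul_pow {R : Type*} [CommSemiring R] (f : ℕ → R) (u : R)
    (N : ℕ) :
    ∑ n ∈ range (N + 1), f n * ((1 + u) ^ (N - n) * u ^ n)
      = ∑ r ∈ range (N + 1), u ^ r * ∑ n ∈ range (r + 1), ((N - n).choose (r - n) : R) * f n := by
  have hexpand : ∀ n ∈ range (N + 1), f n * ((1 + u) ^ (N - n) * u ^ n)
      = ∑ r ∈ Ico n (N + 1), u ^ r * (((N - n).choose (r - n) : R) * f n) := fun n hn => by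
    rw [sum_Ico_eq_sum_range, show N + 1 - n = N - n + 1 by grind, add_comm 1 u, add_pow,
      sum_mul, mul_sum]
    refine sum_congr rfl fun k _ => ?_
    rw [Nat.add_sub_cancel_left, pow_add]
    ring
  rw [sum_congr rfl hexpand, range_eq_Ico, sum_Ico_Ico_comm]
  simp only [← range_eq_Ico, mul_sum]

theorem sum_range_choose_mul_pow_mul_kraw {N n : ℕ} (hn : n ≤ N) {s : ℝ} (hs : s ≠ 0) (w : ℝ) :
    ∑ z ∈ range (N + 1), (N.choose z : ℝ) * s ^ z * w ^ (N - z) * kraw N n z s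
      = (s + w) ^ (N - n) * (w - (1 - s)) ^ n := by
  have hNn : (N.choose n : ℝ) ≠ 0 := by exact_mod_cast (Nat.choose_pos hn).ne'
  have hterm : ∀ ν ∈ range (n + 1),
      ∑ z ∈ range (N + 1), (N.choose z : ℝ) * s ^ z * w ^ (N - z) *
        ((-(1 - s) / s) ^ ν * (z.choose ν : ℝ) * ((N - z).choose (n - ν) : ℝ) / (N.choose n : ℝ))
      = (-(1 - s)) ^ ν * w ^ (n - ν) * (n.choose ν : ℝ) * (s + w) ^ (N - n) := fun ν hν => by
    calc _ = (-(1 - s) / s) ^ ν / (N.choose n : ℝ) *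
            ∑ z ∈ range (N + 1), (N.choose z : ℝ) * (z.choose ν : ℝ) *
              ((N - z).choose (n - ν) : ℝ) * s ^ z * w ^ (N - z) := by
          rw [mul_sum]
          exact sum_congr rfl fun z _ => by ring
      _ = _ := by
          rw [sum_range_choose_mul_choose_mul_choose_mul_pow
            (Nat.lt_succ_iff.1 (mem_range.1 hν)) hn, div_pow]
          field_simp
  simp only [kraw, mul_sum]
  rw [sum_comm, sum_congr rfl hterm, ← sum_mul, show w - (1 - s) = -(1 - s) + w by ring,
    add_pow (-(1 - s)) w n, mul_comm]

theorem sum_phiXY_mul_pow (d N : ℕ) (p : Fin d → ℝ) {phat : ℝ} (hphat : phat ≠ 0) (qhat : ℝ)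
    (x y : Fin d → ℕ) (ψ : ℝ) :
    ∑ z ∈ range (N + 1), phiXY d N p phat qhat x y z * ψ ^ (N - z)
      = ∑ n ∈ range (N + 1),
          kernelQ d N p n x y * ((phat + qhat * ψ) ^ (N - n) * (qhat * ψ - (1 - phat)) ^ n) := by
  have hterm : ∀ z ∈ range (N + 1), phiXY d N p phat qhat x y z * ψ ^ (N - z)
      = ∑ n ∈ range (N + 1), (N.choose z : ℝ) * phat ^ z * (qhat * ψ) ^ (N - z) *
          kraw N n z phat * kernelQ d N p n x y := fun z _ => by
    rw [phiXY, mul_sum, sum_mul]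
    exact sum_congr rfl fun n _ => by ring
  rw [sum_congr rfl hterm, sum_comm]
  refine sum_congr rfl fun n hn => ?_
  rw [← sum_mul, sum_range_choose_mul_pow_mul_kraw (Nat.lt_succ_iff.1 (mem_range.1 hn)) hphat,
    mul_comm]

theorem sum_filter_choose_mul_choose_mul_neg_one_pow (N m r : ℕ) :
    ∑ n ∈ (range (r + 1)).filter (m ≤ ·),
        ((N - n).choose (r - n) : ℝ) * (((N - m).choose (n - m) : ℝ) * (-1 : ℝ) ^ (n - m))
      = if m = r then 1 else 0 := by
  rcases le_or_gt m r with hmr | hrm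
  · have hIco : (range (r + 1)).filter (m ≤ ·) = Ico m (r + 1) := by
      ext n
      simp only [mem_filter, mem_range, mem_Ico]
      omega
    rw [hIco, sum_Ico_eq_sum_range, show r + 1 - m = r - m + 1 by omega]
    have hterm : ∀ j ∈ range (r - m + 1),
        ((N - (m + j)).choose (r - (m + j)) : ℝ) *
            (((N - m).choose (m + j - m) : ℝ) * (-1 : ℝ) ^ (m + j - m))
          = (-1 : ℝ) ^ j * (((N - m).choose j : ℝ) * ((N - m - j).choose (r - m - j) : ℝ)) :=
      fun j _ => by
        rw [Nat.add_sub_cancel_left, Nat.sub_add_eq, Nat.sub_add_eq]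
        ring
    rw [sum_congr rfl hterm, sum_range_neg_one_pow_mul_choose_mul_choose]
    exact if_congr (by omega) rfl rfl
  · rw [if_neg hrm.ne', sum_eq_zero]
    intro n hn
    simp only [mem_filter, mem_range] at hn
    omega

noncomputable def kernelCoeff (d N : ℕ) (p : Fin d → ℝ) (x y z : Fin d → ℕ) : ℝ :=
  (((∑ i, z i).factorial : ℝ) / ∏ i, ((z i).factorial : ℝ)) *
    (∏ i, ((x i).descFactorial (z i) : ℝ) * ((y i).descFactorial (z i) : ℝ) / (p i) ^ (z i)) /
    ((N.descFactorial (∑ i, z i) : ℝ)) ^ 2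

theorem kernelQ_eq_sum_kernelCoeff (d N : ℕ) (p : Fin d → ℝ) (n : ℕ) (x y : Fin d → ℕ) :
    kernelQ d N p n x y
      = ∑ z ∈ (Iic (x ⊓ y)).filter (fun z => ∑ i, z i ≤ n),
          (N.choose (∑ i, z i) : ℝ) * ((N - ∑ i, z i).choose (n - ∑ i, z i) : ℝ) *
            (-1 : ℝ) ^ (n - ∑ i, z i) * kernelCoeff d N p x y z :=
  sum_congr rfl fun z _ => by rw [kernelCoeff]; ring

theorem sum_range_choose_mul_kernelQ (d N : ℕ) (p : Fin d → ℝ) (x y : Fin d → ℕ) (r : ℕ) :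
    ∑ n ∈ range (r + 1), ((N - n).choose (r - n) : ℝ) * kernelQ d N p n x y
      = (N.choose r : ℝ) *
          ∑ z ∈ (Iic (x ⊓ y)).filter (fun z => ∑ i, z i = r), kernelCoeff d N p x y z := by
  simp only [kernelQ_eq_sum_kernelCoeff, sum_filter, mul_sum]
  rw [sum_comm]
  refine sum_congr rfl fun z _ => ?_
  set m := ∑ i, z i
  calc _ = (N.choose m : ℝ) * kernelCoeff d N p x y z * ∑ n ∈ (range (r + 1)).filter (m ≤ ·),
          ((N - n).choose (r - n) : ℝ) * (((N - m).choose (n - m) : ℝ) * (-1 : ℝ) ^ (n - m)) := by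
        rw [sum_filter, mul_sum]
        refine sum_congr rfl fun n _ => ?_
        split_ifs <;> ring
    _ = _ := by
        rw [sum_filter_choose_mul_choose_mul_neg_one_pow]
        split_ifs with hmr
        · rw [hmr]; ring
        · ring

theorem mProb_ne_zero (d N : ℕ) {p : Fin d → ℝ} (hp : ∀ i, p i ≠ 0) (x : Fin d → ℕ) :
    mProb d N p x ≠ 0 :=
  mul_ne_zero (div_ne_zero (by positivity) (prod_ne_zero_iff.2 fun i _ => by positivity))
    (prod_ne_zero_iff.2 fun i _ => pow_ne_zero _ (hp i))

theorem mProb_mul_prod_descFactorial (d : ℕ) (p : Fin d → ℝ) {N r : ℕ} (hr : r ≤ N)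
    {x z : Fin d → ℕ} (hzx : z ≤ x) :
    mProb d N p x * ∏ i, ((x i).descFactorial (z i) : ℝ)
      = N.descFactorial r * (∏ i, p i ^ z i) * mProb d (N - r) p (x - z) := by
  have hfact : ∏ i, ((x i).factorial : ℝ)
      = (∏ i, ((x i - z i).factorial : ℝ)) * ∏ i, ((x i).descFactorial (z i) : ℝ) := by
    rw [← prod_mul_distrib]
    exact prod_congr rfl fun i _ => by exact_mod_cast (Nat.factorial_mul_descFactorial (hzx i)).symm
  have hpow : ∏ i, p i ^ x i = (∏ i, p i ^ z i) * ∏ i, p i ^ (x i - z i) := by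
    rw [← prod_mul_distrib]
    exact prod_congr rfl fun i _ => by rw [← pow_add, Nat.add_sub_cancel' (hzx i)]
  have hN : (N.factorial : ℝ) = (N - r).factorial * N.descFactorial r := by
    exact_mod_cast (Nat.factorial_mul_descFactorial hr).symm
  have hdesc : ∏ i, ((x i).descFactorial (z i) : ℝ) ≠ 0 :=
    prod_ne_zero_iff.2 fun i _ => by
      exact_mod_cast (Nat.descFactorial_eq_zero_iff_lt.not.2 (hzx i).not_gt)
  have hfact_sub : ∏ i, ((x i - z i).factorial : ℝ) ≠ 0 :=
    prod_ne_zero_iff.2 fun i _ => by positivity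
  simp only [mProb, Pi.sub_apply, hfact, hpow, hN]
  field_simp

theorem kernelCoeff_mul_mProb_mul_mProb (d N : ℕ) {p : Fin d → ℝ} (hp : ∀ i, p i ≠ 0)
    {x y z : Fin d → ℕ} (hzx : z ≤ x) (hzy : z ≤ y) (hzN : ∑ i, z i ≤ N) :
    kernelCoeff d N p x y z * (mProb d N p x * mProb d N p y)
      = mProb d (∑ i, z i) p z * mProb d (N - ∑ i, z i) p (x - z) *
          mProb d (N - ∑ i, z i) p (y - z) := by
  have hx := mProb_mul_prod_descFactorial d p hzN hzx
  have hy := mProb_mul_prod_descFactorial d p hzN hzy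
  have hdesc : (N.descFactorial (∑ i, z i) : ℝ) ≠ 0 := by
    exact_mod_cast (Nat.descFactorial_eq_zero_iff_lt.not.2 hzN.not_gt)
  have hpz : ∏ i, p i ^ z i ≠ 0 := prod_ne_zero_iff.2 fun i _ => pow_ne_zero _ (hp i)
  calc _ = ((∑ i, z i).factorial / ∏ i, ((z i).factorial : ℝ)) /
          ((∏ i, p i ^ z i) * (N.descFactorial (∑ i, z i) : ℝ) ^ 2) *
          ((mProb d N p x * ∏ i, ((x i).descFactorial (z i) : ℝ)) *
            (mProb d N p y * ∏ i, ((y i).descFactorial (z i) : ℝ))) := by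
        rw [kernelCoeff, prod_div_distrib, prod_mul_distrib]
        ring
    _ = _ := by
        rw [hx, hy]
        simp only [mProb]
        field_simp

theorem phiXY_pgf_general (d : ℕ) (p : Fin d → ℝ)
    (hp : ∀ j, 0 < p j) (N : ℕ)
    (phat qhat : ℝ) (hphat : phat ∈ Set.Ioo (0 : ℝ) 1) (hqhat : qhat = 1 - phat)
    (x y : Fin d → ℕ) (ψ : ℝ) :
    ∑ z ∈ Finset.range (N + 1), phiXY d N p phat qhat x y z * ψ ^ (N - z)
      = (mProb d N p x * mProb d N p y)⁻¹ *
          ∑ r ∈ Finset.range (N + 1),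
            (N.choose r : ℝ) * (-1 : ℝ) ^ r * (1 - ψ) ^ r * qhat ^ r *
              ∑ z ∈ (Finset.Iic (x ⊓ y)).filter (fun z => ∑ i, z i = r),
                ((r.factorial : ℝ) / ∏ i, ((z i).factorial : ℝ)) * (∏ i, (p i) ^ (z i)) *
                (((N - r).factorial : ℝ) / ∏ i, ((x i - z i).factorial : ℝ)) *
                (∏ i, (p i) ^ (x i - z i)) *
                (((N - r).factorial : ℝ) / ∏ i, ((y i - z i).factorial : ℝ)) *
                (∏ i, (p i) ^ (y i - z i)) := by
  have hp₀ : ∀ j, p j ≠ 0 := fun j => (hp j).ne'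
  have hmProb : mProb d N p x * mProb d N p y ≠ 0 :=
    mul_ne_zero (mProb_ne_zero d N hp₀ x) (mProb_ne_zero d N hp₀ y)
  rw [sum_phiXY_mul_pow d N p hphat.1.ne', show phat + qhat * ψ = 1 + qhat * (ψ - 1) by
    rw [hqhat]; ring, show qhat * ψ - (1 - phat) = qhat * (ψ - 1) by rw [hqhat]; ring,
    sum_range_mul_one_add_pow_mul_pow, mul_sum]
  refine sum_congr rfl fun r hr => ?_
  rw [sum_range_choose_mul_kernelQ, mul_sum, mul_sum, mul_sum, mul_sum]
  refine sum_congr rfl fun z hz => ?_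
  obtain ⟨hzxy, rfl⟩ : z ≤ x ⊓ y ∧ ∑ i, z i = r := by simpa using hz
  have hK := kernelCoeff_mul_mProb_mul_mProb d N hp₀ (le_inf_iff.1 hzxy).1
    (le_inf_iff.1 hzxy).2 (Nat.lt_succ_iff.1 (mem_range.1 hr))
  rw [mul_comm, ← eq_inv_mul_iff_mul_eq₀ hmProb] at hK
  rw [hK, show qhat * (ψ - 1) = -1 * (1 - ψ) * qhat by ring, mul_pow, mul_pow]
  simp only [mProb, Pi.sub_apply]
  ring

/-- The probability generating function identity for `N − Z` under `φ_{x,y}`, identifying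
`N − Z` with the number of thinned matches in two multinomial sequences of trials. -/
theorem phiXY_pgf (d : ℕ) (hd : 2 ≤ d) (p : Fin d → ℝ)
    (hp : ∀ j, 0 < p j) (hsum : ∑ j, p j = 1) (N : ℕ) (hN : 0 < N)
    (phat qhat : ℝ) (hphat : phat ∈ Set.Ioo (0 : ℝ) 1) (hqhat : qhat = 1 - phat)
    (hmin : ∀ j, qhat ≤ p j)
    (x y : Fin d → ℕ) (hx : ∑ i, x i = N) (hy : ∑ i, y i = N) (ψ : ℝ) :
    ∑ z ∈ Finset.range (N + 1), phiXY d N p phat qhat x y z * ψ ^ (N - z)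
      = (mProb d N p x * mProb d N p y)⁻¹ *
          ∑ r ∈ Finset.range (N + 1),
            (N.choose r : ℝ) * (-1 : ℝ) ^ r * (1 - ψ) ^ r * qhat ^ r *
              ∑ z ∈ (Finset.Iic (x ⊓ y)).filter (fun z => ∑ i, z i = r),
                ((r.factorial : ℝ) / ∏ i, ((z i).factorial : ℝ)) * (∏ i, (p i) ^ (z i)) *
                (((N - r).factorial : ℝ) / ∏ i, ((x i - z i).factorial : ℝ)) *
                (∏ i, (p i) ^ (x i - z i)) *
                (((N - r).factorial : ℝ) / ∏ i, ((y i - z i).factorial : ℝ)) *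
                (∏ i, (p i) ^ (y i - z i)) :=
  phiXY_pgf_general d p hp N phat qhat hphat hqhat x y ψ
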